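/- arXiv:2307.01788 — 5 statements merged into one kernel-verified Lean document; each statement's English description precedes it below -/
import Mathlib

section
/- For any directed family (f_i)_{i∈I} of antitonic maps from [0,∞) to [0,∞] (directed in the pointwise ordering), ∫₀^∞ sup_{i∈I} f_i(t) dt = sup_{i∈I} ∫₀^∞ f_i(t) dt, where the integrals are improper Riemann integrals of antitonic functions. -/
open scoped ENNReal NNReal

variable {X : Type*}

/-- A lattice of subsets of `X`. -/
def IsLatt (L : Set (Set X)) : Prop :=
  ∅ ∈ L ∧ Set.univ ∈ L ∧ (∀ U ∈ L, ∀ V ∈ L, U ∪ V ∈ L) ∧ (∀ U ∈ L, ∀ V ∈ L, U ∩ V ∈ L)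

/-- An ω-topology: a lattice of subsets closed under countable unions. -/
def IsOmegaTop (L : Set (Set X)) : Prop :=
  IsLatt L ∧ ∀ U : ℕ → Set X, (∀ n, U n ∈ L) → (⋃ n, U n) ∈ L

/-- A valuation on `(X, L)`: strict, monotonic, modular. -/
def IsVal (L : Set (Set X)) (ν : Set X → ℝ≥0∞) : Prop :=
  ν ∅ = 0 ∧ (∀ U ∈ L, ∀ V ∈ L, U ⊆ V → ν U ≤ ν V) ∧
    (∀ U ∈ L, ∀ V ∈ L, ν U + ν V = ν (U ∪ V) + ν (U ∩ V))

/-- ω-continuity of a valuation: it preserves suprema of monotone sequences of sets. -/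
def IsOmegaContVal (L : Set (Set X)) (ν : Set X → ℝ≥0∞) : Prop :=
  ∀ U : ℕ → Set X, (∀ n, U n ∈ L) → Monotone U → ν (⋃ n, U n) = ⨆ n, ν (U n)

/-- `𝓛(X, L)`: maps `h : X → ℝ≥0∞` with `h⁻¹((t,∞]) ∈ L` for all `t ≥ 0`. -/
def MemL (L : Set (Set X)) (h : X → ℝ≥0∞) : Prop :=
  ∀ t : ℝ≥0, {x | (t : ℝ≥0∞) < h x} ∈ L

/-- The improper Riemann integral `∫₀^∞ f(t) dt` of an antitonic map `f : ℝ≥0 → ℝ≥0∞`,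
realized as a Lebesgue integral over `(0, ∞)`. -/
noncomputable def riem (f : ℝ≥0 → ℝ≥0∞) : ℝ≥0∞ :=
  ∫⁻ t in Set.Ioi (0 : ℝ), f t.toNNReal

/-- The Choquet integral `∫ h dν = ∫₀^∞ ν(h⁻¹((t,∞])) dt`. -/
noncomputable def choquet (ν : Set X → ℝ≥0∞) (h : X → ℝ≥0∞) : ℝ≥0∞ :=
  riem fun t => ν {x | (t : ℝ≥0∞) < h x}

/-- The characteristic map of `U`. -/
noncomputable def chi (U : Set X) : X → ℝ≥0∞ :=
  U.indicator fun _ => 1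

/-- `(g·μ)(U) := ∫ χ_U·g dμ`. -/
noncomputable def densMul (g : X → ℝ≥0∞) (μ : Set X → ℝ≥0∞) (U : Set X) : ℝ≥0∞ :=
  choquet μ fun x => chi U x * g x

/-- `(g·μ)(C) = ∫₀^∞ μ(C ∩ g⁻¹((t,∞])) dt`, the explicit formula for the density valuation. -/
noncomputable def densF (g : X → ℝ≥0∞) (μ : Set X → ℝ≥0∞) (C : Set X) : ℝ≥0∞ :=
  riem fun t => μ (C ∩ {x | (t : ℝ≥0∞) < g x})

/-- The smallest algebra of subsets of `X` containing `L`. -/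
def genAlg (L : Set (Set X)) : Set (Set X) :=
  {C | ∀ A : Set (Set X),
    (L ⊆ A ∧ ∅ ∈ A ∧ (∀ S ∈ A, Sᶜ ∈ A) ∧ (∀ S ∈ A, ∀ T ∈ A, S ∪ T ∈ A)) → C ∈ A}

/-- A crescent: a difference of two elements of `L`. -/
def IsCrescent (L : Set (Set X)) (C : Set X) : Prop :=
  ∃ U ∈ L, ∃ V ∈ L, C = U \ V

/-- A signed valuation: strict and modular, real-valued. -/
def IsSignedVal (L : Set (Set X)) (ς : Set X → ℝ) : Prop :=
  ς ∅ = 0 ∧ ∀ U ∈ L, ∀ V ∈ L, ς (U ∪ V) + ς (U ∩ V) = ς U + ς V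

/-- The Hahn decomposition property of a signed valuation `ς` on `(X, L)`: stated via any
signed valuation extending `ς` to the generated algebra (such an extension is unique). -/
def HasHahn (L : Set (Set X)) (ς : Set X → ℝ) : Prop :=
  ∀ ς' : Set X → ℝ, IsSignedVal (genAlg L) ς' → (∀ U ∈ L, ς' U = ς U) →
    ∃ U ∈ L, (∀ C, IsCrescent L C → C ⊆ U → 0 ≤ ς' C) ∧
      (∀ C, IsCrescent L C → Disjoint C U → ς' C ≤ 0)

/-!
For the nontrivial inequality, only countably many points matter: an antitone function on `ℝ` is
continuous off a countable set, so two antitone integrands that are ordered at every rational point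
are ordered almost everywhere. By directedness, the pointwise supremum at all rationals is already
attained along a single increasing sequence `f (k n)`, and monotone convergence finishes the proof.
-/

open MeasureTheory Set Filter Topology

lemma Antitone.le_of_le_on_dense_of_continuousAt {β : Type*} [Preorder β] [TopologicalSpace β]
    [ClosedIciTopology β] {G H : ℝ → β} (hG : Antitone G) {D : Set ℝ} (hD : Dense D)
    (hle : ∀ x ∈ D, G x ≤ H x) {x : ℝ} (hx : ContinuousAt H x) : G x ≤ H x := by
  obtain ⟨u, -, huD, hu⟩ := hD.exists_seq_strictMono_tendsto_of_lt (sub_one_lt x)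
  exact ge_of_tendsto' ((hx.tendsto).comp hu) fun n =>
    (hG (huD n).1.2.le).trans (hle _ (huD n).2)

lemma Antitone.ae_le_of_le_on_dense {G H : ℝ → ℝ≥0∞} (hG : Antitone G) (hH : Antitone H)
    {D : Set ℝ} (hD : Dense D) (hle : ∀ x ∈ D, G x ≤ H x) : G ≤ᵐ[volume] H := by
  filter_upwards [hH.countable_not_continuousAt.ae_notMem volume] with x hx
  exact hG.le_of_le_on_dense_of_continuousAt hD hle (not_not.mp hx)

lemma riem_mono_of_le_on_dense {g h : ℝ≥0 → ℝ≥0∞} (hg : Antitone g) (hh : Antitone h)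
    {D : Set ℝ} (hD : Dense D) (hle : ∀ x ∈ D, g x.toNNReal ≤ h x.toNNReal) : riem g ≤ riem h :=
  lintegral_mono_ae <| ae_restrict_of_ae <|
    (hg.comp_monotone Real.toNNReal_monotone).ae_le_of_le_on_dense
      (hh.comp_monotone Real.toNNReal_monotone) hD hle

lemma riem_iSup_of_monotone {f : ℕ → ℝ≥0 → ℝ≥0∞} (hf : ∀ n, Antitone (f n))
    (hmono : Monotone f) :
    riem (fun t => ⨆ n, f n t) = ⨆ n, riem (f n) :=
  lintegral_iSup (fun n => ((hf n).comp_monotone Real.toNNReal_monotone).measurable)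
    fun _ _ hmn _ => hmono hmn _

lemma Directed.exists_monotone_seq_ge {ι β : Type*} [Preorder β] {f : ι → β}
    (hf : Directed (· ≤ ·) f) (j : ℕ → ι) :
    ∃ k : ℕ → ι, Monotone (f ∘ k) ∧ ∀ n, f (j n) ≤ f (k n) := by
  choose ub hub using hf
  let k : ℕ → ι := fun n => Nat.rec (j 0) (fun m km => ub km (j (m + 1))) n
  refine ⟨k, monotone_nat_of_le_succ fun n => (hub _ _).1, fun n => ?_⟩
  cases n with
  | zero => exact le_rfl
  | succ m => exact (hub _ _).2

section SeqSup

variable {β : Type*} [CompleteLinearOrder β] [TopologicalSpace β] [OrderTopology β]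
  [FirstCountableTopology β]

lemma exists_seq_iSup_eq {ι : Type*} [Nonempty ι] (g : ι → β) :
    ∃ φ : ℕ → ι, ⨆ n, g (φ n) = ⨆ i, g i := by
  obtain ⟨u, hu_mono, hu_tend, hu_mem⟩ :=
    exists_seq_tendsto_sSup (range_nonempty g) (OrderTop.bddAbove _)
  choose φ hφ using hu_mem
  refine ⟨φ, ?_⟩
  simp only [hφ, ← sSup_range]
  exact tendsto_nhds_unique (tendsto_atTop_iSup hu_mono) hu_tend

lemma Directed.exists_monotone_seq_iSup_eq {ι α D : Type*} [Nonempty ι] [Countable D]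
    [Nonempty D] {f : ι → α → β} (hf : Directed (· ≤ ·) f) (x : D → α) :
    ∃ k : ℕ → ι, Monotone (f ∘ k) ∧ ∀ d, ⨆ n, f (k n) (x d) = ⨆ i, f i (x d) := by
  choose φ hφ using fun d => exists_seq_iSup_eq fun i => f i (x d)
  obtain ⟨e, he⟩ := exists_surjective_nat (D × ℕ)
  obtain ⟨k, hk, hjk⟩ := hf.exists_monotone_seq_ge fun n => φ (e n).1 (e n).2
  refine ⟨k, hk, fun d => le_antisymm (iSup_mono' fun n => ⟨k n, le_rfl⟩) ?_⟩
  rw [← hφ d]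
  refine iSup_le fun m => ?_
  obtain ⟨n, hn⟩ := he (d, m)
  calc f (φ d m) (x d) = f (φ (e n).1 (e n).2) (x d) := by rw [hn]
    _ ≤ f (k n) (x d) := hjk n _
    _ ≤ ⨆ n, f (k n) (x d) := le_iSup (fun n => f (k n) (x d)) n

end SeqSup

/-- Riemann integration is Scott-continuous in the integrated antitonic map. -/
theorem stmt4 {ι : Type*} [Nonempty ι] (f : ι → ℝ≥0 → ℝ≥0∞) (hf : ∀ i, Antitone (f i))
    (hdir : ∀ i j : ι, ∃ k : ι, f i ≤ f k ∧ f j ≤ f k) :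
    riem (fun t => ⨆ i, f i t) = ⨆ i, riem (f i) := by
  refine le_antisymm ?_ <| iSup_le fun i =>
    lintegral_mono fun t => le_iSup (fun i => f i t.toNNReal) i
  obtain ⟨k, hk, hsup⟩ :=
    Directed.exists_monotone_seq_iSup_eq (f := f) hdir fun q : ℚ => (q : ℝ).toNNReal
  calc riem (fun t => ⨆ i, f i t) ≤ riem (fun t => ⨆ n, f (k n) t) := by
        refine riem_mono_of_le_on_dense (fun a b hab => iSup_mono fun i => hf i hab)
          (fun a b hab => iSup_mono fun n => hf (k n) hab) Rat.denseRange_cast ?_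
        rintro _ ⟨q, rfl⟩
        exact (hsup q).ge
    _ = ⨆ n, riem (f (k n)) := riem_iSup_of_monotone (fun n => hf (k n)) hk
    _ ≤ ⨆ i, riem (f i) := iSup_comp_le (fun i => riem (f i)) k
end

section
/- Let (X, L) be an ω-topological space and ν an ω-continuous valuation on (X, L). Then the Choquet integral is additive in the integrated function: for all h, h' ∈ 𝓛(X, L), ∫ (h + h') dν = ∫ h dν + ∫ h' dν. -/
open scoped ENNReal NNReal

variable {X : Type*}

/-! A single step `a · χ_U` with `U ∈ L` is handled by modularity, level by level: writing
`g = f + a · χ_U`, one has `ν{g > t} + ν(U ∩ {f > t}) = ν U + ν{f > t}` for `t < a` and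
`ν{g > t} + ν(U ∩ {f > t}) = ν{f > t} + ν(U ∩ {f > t - a})` for `t ≥ a`. Integrating in `t`, the
two copies of `∫ ν(U ∩ {f > t}) dt` cancel (or everything is infinite), so
`∫ g dν = ∫ f dν + a ν(U)`. A staircase below `h'` with finitely many steps is a finite sum of such
steps, and `h'` is the supremum of an increasing sequence of staircases with steps at a dense
sequence of levels; ω-continuity of `ν` and monotone convergence pass additivity to the limit. -/

open MeasureTheory Set

theorem riem_mono {φ ψ : ℝ≥0 → ℝ≥0∞} (h : φ ≤ ψ) : riem φ ≤ riem ψ :=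
  lintegral_mono fun _ => h _

theorem riem_eq_lintegral_Ioo_add_lintegral_Ici {a : ℝ≥0} (ha : 0 < a) (φ : ℝ≥0 → ℝ≥0∞) :
    riem φ = (∫⁻ t in Ioo 0 (a : ℝ), φ t.toNNReal) + ∫⁻ t in Ici (a : ℝ), φ t.toNNReal := by
  rw [riem, ← Ioo_union_Ici_eq_Ioi (NNReal.coe_pos.mpr ha),
    lintegral_union measurableSet_Ici (disjoint_left.mpr fun _ h h' => h.2.not_ge h')]

theorem setLIntegral_Ici_sub_eq_riem (a : ℝ≥0) (φ : ℝ≥0 → ℝ≥0∞) :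
    ∫⁻ t in Ici (a : ℝ), φ (t - a).toNNReal = riem φ := by
  have hpre : (fun t : ℝ => t + a) ⁻¹' Ici (a : ℝ) = Ici 0 := by
    ext t; simp
  have := (measurePreserving_add_right volume (a : ℝ)).setLIntegral_comp_preimage_emb
    (MeasurableEquiv.addRight (a : ℝ)).measurableEmbedding (fun t => φ (t - a).toNNReal) (Ici a)
  rw [hpre] at this
  simp only [add_sub_cancel_right] at this
  rw [← this, riem, restrict_Ioi_eq_restrict_Ici]

theorem riem_eq_add_mul_of_shift {F G H : ℝ≥0 → ℝ≥0∞} {a : ℝ≥0} {c : ℝ≥0∞} (ha : 0 < a)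
    (hG : Measurable G) (hGF : G ≤ F) (hFH : F ≤ H)
    (hlow : ∀ t < a, H t + G t = c + F t)
    (hhigh : ∀ t, a ≤ t → H t + G t = F t + G (t - a)) :
    riem H = riem F + a * c := by
  have hG' : Measurable fun t : ℝ => G t.toNNReal := hG.comp measurable_real_toNNReal
  have low : ∫⁻ t in Ioo 0 (a : ℝ), H t.toNNReal + G t.toNNReal
      = ∫⁻ t in Ioo 0 (a : ℝ), c + F t.toNNReal :=
    setLIntegral_congr_fun measurableSet_Ioo fun t ht =>
      hlow _ ((Real.toNNReal_lt_iff_lt_coe ht.1.le).mpr ht.2)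
  have high : ∫⁻ t in Ici (a : ℝ), H t.toNNReal + G t.toNNReal
      = ∫⁻ t in Ici (a : ℝ), F t.toNNReal + G (t - a).toNNReal := by
    refine setLIntegral_congr_fun measurableSet_Ici fun t (ht : (a : ℝ) ≤ t) => ?_
    have ht0 : 0 ≤ t := a.coe_nonneg.trans ht
    rw [hhigh _ ((Real.le_toNNReal_iff_coe_le ht0).mpr ht), NNReal.sub_def,
      Real.coe_toNNReal t ht0]
  rw [lintegral_add_right _ hG', lintegral_add_left measurable_const, setLIntegral_const,
    Real.volume_Ioo, sub_zero, ENNReal.ofReal_coe_nnreal] at low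
  have hGa : Measurable fun t : ℝ => G (t - a).toNNReal := by fun_prop
  rw [lintegral_add_right _ hG', lintegral_add_right _ hGa, setLIntegral_Ici_sub_eq_riem] at high
  have key : riem H + riem G = (riem F + a * c) + riem G := by
    simp only [riem_eq_lintegral_Ioo_add_lintegral_Ici ha]
    calc _ = ((∫⁻ t in Ioo 0 (a : ℝ), H t.toNNReal) + ∫⁻ t in Ioo 0 (a : ℝ), G t.toNNReal)
          + ((∫⁻ t in Ici (a : ℝ), H t.toNNReal) + ∫⁻ t in Ici (a : ℝ), G t.toNNReal) := by ring
      _ = _ := by rw [low, high, riem_eq_lintegral_Ioo_add_lintegral_Ici ha G]; ring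
  by_cases hGtop : riem G = ⊤
  · have hFtop : riem F = ⊤ := top_le_iff.mp (hGtop ▸ riem_mono hGF)
    rw [hFtop, top_add]
    exact top_le_iff.mp (hFtop ▸ riem_mono hFH)
  · exact WithTop.add_right_cancel hGtop key

noncomputable def stair (g : X → ℝ≥0∞) (P : Finset ℝ≥0) (x : X) : ℝ≥0∞ :=
  P.sup fun t => {y | (t : ℝ≥0∞) < g y}.indicator (fun _ => (t : ℝ≥0∞)) x

theorem stair_mono (g : X → ℝ≥0∞) : Monotone (stair g) :=
  fun _ _ hPQ _ => Finset.sup_mono hPQ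

@[simp]
theorem stair_empty (g : X → ℝ≥0∞) : stair g ∅ = 0 :=
  rfl

theorem indicator_le_stair (g : X → ℝ≥0∞) {P : Finset ℝ≥0} {t : ℝ≥0} (ht : t ∈ P) (x : X) :
    {y | (t : ℝ≥0∞) < g y}.indicator (fun _ => (t : ℝ≥0∞)) x ≤ stair g P x :=
  Finset.le_sup (f := fun t : ℝ≥0 => {y | (t : ℝ≥0∞) < g y}.indicator (fun _ => (t : ℝ≥0∞)) x) ht

theorem stair_eq_coe_sup {g : X → ℝ≥0∞} {P : Finset ℝ≥0} {x : X}
    (hx : ∀ t ∈ P, (t : ℝ≥0∞) < g x) : stair g P x = ↑(P.sup id) := by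
  rw [stair, ENNReal.coe_finset_sup]
  exact Finset.sup_congr rfl fun t ht => by simp [hx t ht]

theorem stair_insert (g : X → ℝ≥0∞) {P : Finset ℝ≥0} {a : ℝ≥0} (ha : ∀ t ∈ P, t < a) :
    stair g (insert a P)
      = stair g P + {x | (a : ℝ≥0∞) < g x}.indicator fun _ => ((a - P.sup id : ℝ≥0) : ℝ≥0∞) := by
  ext x
  simp only [stair, Finset.sup_insert, Pi.add_apply]
  by_cases hx : x ∈ {y | (a : ℝ≥0∞) < g y}
  · have hP : ∀ t ∈ P, (t : ℝ≥0∞) < g x :=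
      fun t ht => (ENNReal.coe_lt_coe.mpr (ha t ht)).trans hx
    have hsup : P.sup id ≤ a := Finset.sup_le fun t ht => (ha t ht).le
    rw [← stair, stair_eq_coe_sup hP, indicator_of_mem hx, indicator_of_mem hx,
      ← ENNReal.coe_add, add_tsub_cancel_of_le hsup, ← ENNReal.coe_max, max_eq_left hsup]
  · simp [indicator_of_notMem hx]

theorem iSup_stair_eq {u : ℕ → ℝ≥0} (hu : DenseRange u) (g : X → ℝ≥0∞) :
    ⨆ n, stair g ((Finset.range n).image u) = g := by
  ext x
  rw [iSup_apply]
  refine le_antisymm (iSup_le fun n => Finset.sup_le fun t _ => ?_) (le_of_forall_lt fun c hc => ?_)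
  · exact indicator_apply_le' (fun ht => ht.le) fun _ => zero_le
  obtain ⟨r, hcr, hrx⟩ := ENNReal.lt_iff_exists_nnreal_btwn.mp hc
  obtain ⟨r', hrr', hr'x⟩ := ENNReal.lt_iff_exists_nnreal_btwn.mp hrx
  obtain ⟨_, ⟨k, rfl⟩, hkr, hkr'⟩ := hu.exists_between (ENNReal.coe_lt_coe.mp hrr')
  have hk : x ∈ {y | (u k : ℝ≥0∞) < g y} := (ENNReal.coe_lt_coe.mpr hkr').trans hr'x
  calc c < u k := hcr.trans (ENNReal.coe_lt_coe.mpr hkr)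
    _ = {y | (u k : ℝ≥0∞) < g y}.indicator (fun _ => (u k : ℝ≥0∞)) x :=
      (indicator_of_mem hk fun _ => (u k : ℝ≥0∞)).symm
    _ ≤ stair g ((Finset.range (k + 1)).image u) x :=
      indicator_le_stair g (Finset.mem_image_of_mem u (Finset.mem_range.mpr k.lt_succ_self)) x
    _ ≤ ⨆ n, stair g ((Finset.range n).image u) x := le_iSup (fun n => stair g _ x) _

section Valuation

variable {L : Set (Set X)} {ν : Set X → ℝ≥0∞}

theorem IsVal.mono (hν : IsVal L ν) {U V : Set X} (hU : U ∈ L) (hV : V ∈ L) (h : U ⊆ V) :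
    ν U ≤ ν V :=
  hν.2.1 U hU V hV h

theorem IsVal.modular (hν : IsVal L ν) {U V : Set X} (hU : U ∈ L) (hV : V ∈ L) :
    ν U + ν V = ν (U ∪ V) + ν (U ∩ V) :=
  hν.2.2 U hU V hV

theorem setOf_lt_subset_setOf_lt (f : X → ℝ≥0∞) {s t : ℝ≥0} (hst : s ≤ t) :
    {x | (t : ℝ≥0∞) < f x} ⊆ {x | (s : ℝ≥0∞) < f x} :=
  fun _ hx => lt_of_le_of_lt (ENNReal.coe_le_coe.mpr hst) hx

theorem setOf_lt_add_indicator_of_lt (f : X → ℝ≥0∞) (U : Set X) {a t : ℝ≥0} (h : t < a) :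
    {x | (t : ℝ≥0∞) < (f + U.indicator fun _ => (a : ℝ≥0∞)) x} = U ∪ {x | (t : ℝ≥0∞) < f x} := by
  ext x
  by_cases hx : x ∈ U
  · simpa [hx] using (ENNReal.coe_lt_coe.mpr h).trans_le le_add_self
  · simp [hx]

theorem setOf_lt_add_indicator_of_le (f : X → ℝ≥0∞) (U : Set X) {a t : ℝ≥0} (h : a ≤ t) :
    {x | (t : ℝ≥0∞) < (f + U.indicator fun _ => (a : ℝ≥0∞)) x}
      = {x | (t : ℝ≥0∞) < f x} ∪ (U ∩ {x | ((t - a : ℝ≥0) : ℝ≥0∞) < f x}) := by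
  ext x
  by_cases hx : x ∈ U
  · have key : ((t - a : ℝ≥0) : ℝ≥0∞) < f x ↔ (t : ℝ≥0∞) < f x + a := by
      rw [ENNReal.coe_sub]
      exact ENNReal.sub_lt_iff_lt_right ENNReal.coe_ne_top (by exact_mod_cast h)
    simp only [mem_ofPred_eq, Pi.add_apply, indicator_of_mem hx, mem_union, mem_inter_iff, hx,
      true_and, key]
    exact ⟨Or.inr, fun h' => h'.elim (fun h' => h'.trans_le le_self_add) id⟩
  · simp [hx]

theorem MemL.add_indicator (hL : IsLatt L) {f : X → ℝ≥0∞} (hf : MemL L f) {U : Set X}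
    (hU : U ∈ L) (a : ℝ≥0) : MemL L (f + U.indicator fun _ => (a : ℝ≥0∞)) := by
  obtain ⟨-, -, hcup, hcap⟩ := hL
  intro t
  rcases lt_or_ge t a with h | h
  · rw [setOf_lt_add_indicator_of_lt f U h]
    exact hcup _ hU _ (hf t)
  · rw [setOf_lt_add_indicator_of_le f U h]
    exact hcup _ (hf t) _ (hcap _ hU _ (hf _))

theorem choquet_add_indicator (hL : IsLatt L) (hν : IsVal L ν) {f : X → ℝ≥0∞} (hf : MemL L f)
    {U : Set X} (hU : U ∈ L) (a : ℝ≥0) :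
    choquet ν (f + U.indicator fun _ => (a : ℝ≥0∞)) = choquet ν f + a * ν U := by
  rcases eq_zero_or_pos a with rfl | ha
  · simp [← Pi.zero_def]
  have hcap : ∀ t : ℝ≥0, U ∩ {x | (t : ℝ≥0∞) < f x} ∈ L := fun t => hL.2.2.2 _ hU _ (hf t)
  have hg := hf.add_indicator hL hU a
  refine riem_eq_add_mul_of_shift (G := fun t => ν (U ∩ {x | (t : ℝ≥0∞) < f x})) ha
    (Antitone.measurable fun s t hst =>
      hν.mono (hcap t) (hcap s) (inter_subset_inter_right U (setOf_lt_subset_setOf_lt f hst)))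
    (fun t => hν.mono (hcap t) (hf t) inter_subset_right)
    (fun t => hν.mono (hf t) (hg t) fun x (hx : (t : ℝ≥0∞) < f x) => hx.trans_le le_self_add)
    (fun t ht => ?_) (fun t ht => ?_)
  · rw [setOf_lt_add_indicator_of_lt f U ht]
    exact (hν.modular hU (hf t)).symm
  · rw [setOf_lt_add_indicator_of_le f U ht, hν.modular (hf t) (hcap _)]
    congr 2
    ext x
    exact ⟨fun hx => ⟨hx.2, hx.1, setOf_lt_subset_setOf_lt f tsub_le_self hx.2⟩,
      fun hx => ⟨hx.2.1, hx.1⟩⟩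

theorem memL_zero (h : ∅ ∈ L) : MemL L (0 : X → ℝ≥0∞) := by
  intro t
  simpa using h

theorem choquet_zero (h : ν ∅ = 0) : choquet ν (0 : X → ℝ≥0∞) = 0 := by
  simp [choquet, riem, h]

theorem IsVal.measurable_level (hν : IsVal L ν) {f : X → ℝ≥0∞} (hf : MemL L f) :
    Measurable fun t : ℝ≥0 => ν {x | (t : ℝ≥0∞) < f x} :=
  Antitone.measurable fun s t hst => hν.mono (hf t) (hf s) (setOf_lt_subset_setOf_lt f hst)

theorem choquet_iSup (hν : IsVal L ν) (hνω : IsOmegaContVal L ν) {F : ℕ → X → ℝ≥0∞}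
    (hF : ∀ n, MemL L (F n)) (hmono : Monotone F) :
    choquet ν (⨆ n, F n) = ⨆ n, choquet ν (F n) := by
  have hlevel : ∀ t : ℝ≥0, ν {x | (t : ℝ≥0∞) < (⨆ n, F n) x}
      = ⨆ n, ν {x | (t : ℝ≥0∞) < F n x} := by
    intro t
    have hunion : {x | (t : ℝ≥0∞) < (⨆ n, F n) x} = ⋃ n, {x | (t : ℝ≥0∞) < F n x} := by
      ext x
      simp [lt_iSup_iff]
    rw [hunion]
    exact hνω _ (fun n => hF n t) fun m n hmn x (hx : (t : ℝ≥0∞) < F m x) =>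
      hx.trans_le (hmono hmn x)
  simp only [choquet, riem, hlevel]
  exact lintegral_iSup (fun n => (hν.measurable_level (hF n)).comp measurable_real_toNNReal)
    fun m n hmn t => hν.mono (hF m _) (hF n _) fun x (hx : _ < F m x) => hx.trans_le (hmono hmn x)

theorem MemL.add_stair (hL : IsLatt L) {f g : X → ℝ≥0∞} (hf : MemL L f) (hg : MemL L g)
    (P : Finset ℝ≥0) : MemL L (f + stair g P) := by
  induction P using Finset.induction_on_max with
  | empty => simpa using hf
  | insert a P ha ih =>
    rw [stair_insert g ha, ← add_assoc]
    exact ih.add_indicator hL (hg a) _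

theorem MemL.stair (hL : IsLatt L) {g : X → ℝ≥0∞} (hg : MemL L g) (P : Finset ℝ≥0) :
    MemL L (stair g P) := by
  simpa using (memL_zero hL.1).add_stair hL hg P

theorem choquet_add_stair (hL : IsLatt L) (hν : IsVal L ν) {f g : X → ℝ≥0∞} (hf : MemL L f)
    (hg : MemL L g) (P : Finset ℝ≥0) :
    choquet ν (f + stair g P) = choquet ν f + choquet ν (stair g P) := by
  induction P using Finset.induction_on_max generalizing f with
  | empty => simp [choquet_zero hν.1]
  | insert a P ha ih =>
    rw [stair_insert g ha, ← add_assoc, choquet_add_indicator hL hν (hf.add_stair hL hg P) (hg a),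
      choquet_add_indicator hL hν (hg.stair hL P) (hg a), ih hf, add_assoc]

end Valuation

/-- additivity of the Choquet integral in the integrated function, for
ω-continuous valuations on ω-topological spaces. -/
theorem stmt6 (L : Set (Set X)) (hL : IsOmegaTop L) (ν : Set X → ℝ≥0∞)
    (hν : IsVal L ν) (hνω : IsOmegaContVal L ν)
    (h h' : X → ℝ≥0∞) (hh : MemL L h) (hh' : MemL L h') :
    choquet ν (fun x => h x + h' x) = choquet ν h + choquet ν h' := by
  obtain ⟨u, hu⟩ := TopologicalSpace.exists_dense_seq ℝ≥0
  set s : ℕ → X → ℝ≥0∞ := fun n => stair h' ((Finset.range n).image u)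
  have hs : Monotone s := fun m n hmn =>
    stair_mono h' (Finset.image_subset_image (Finset.range_subset_range.mpr hmn))
  have hsup : ⨆ n, s n = h' := iSup_stair_eq hu h'
  have hsum : (fun x => h x + h' x) = ⨆ n, h + s n := by
    ext x
    simp only [iSup_apply, Pi.add_apply, ← ENNReal.add_iSup, ← hsup]
  calc choquet ν (fun x => h x + h' x)
      = ⨆ n, choquet ν (h + s n) := by
        rw [hsum, choquet_iSup (F := fun n => h + s n) hν hνω (fun n => hh.add_stair hL.1 hh' _)
          fun m n hmn => add_le_add le_rfl (hs hmn)]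
    _ = ⨆ n, (choquet ν h + choquet ν (s n)) := by
        simp only [s, choquet_add_stair hL.1 hν hh hh']
    _ = choquet ν h + choquet ν h' := by
        rw [← ENNReal.add_iSup, ← choquet_iSup hν hνω (fun n => hh'.stair hL.1 _) hs, hsup]
end

section
/- Let (X, L) be an ω-topological space and ν an ω-continuous valuation. For every monotone sequence (h_n) in 𝓛(X, L), ∫ (sup_n h_n) dν = sup_n ∫ h_n dν (ω-continuity of the Choquet integral in the integrated function). -/
open scoped ENNReal NNReal

variable {X : Type*}

lemma setOf_lt_iSup {α ι : Type*} [CompleteLinearOrder α] (h : ι → X → α) (t : α) :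
    {x | t < ⨆ n, h n x} = ⋃ n, {x | t < h n x} := by
  ext x
  simp [lt_iSup_iff]

lemma riem_iSup {f : ℕ → ℝ≥0 → ℝ≥0∞} (hanti : ∀ n, Antitone (f n)) (hmono : Monotone f) :
    riem (fun t => ⨆ n, f n t) = ⨆ n, riem (f n) := by
  have hmeas : ∀ n, Measurable fun t : ℝ => f n t.toNNReal := fun n =>
    ((hanti n).comp_monotone Real.toNNReal_monotone).measurable
  exact MeasureTheory.lintegral_iSup hmeas fun m n hmn t => hmono hmn _

section Superlevel

variable {L : Set (Set X)} {ν : Set X → ℝ≥0∞}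

lemma IsVal.antitone_superlevel (hν : IsVal L ν) {h : X → ℝ≥0∞} (hh : MemL L h) :
    Antitone fun t : ℝ≥0 => ν {x | (t : ℝ≥0∞) < h x} := fun s t hst =>
  hν.2.1 _ (hh t) _ (hh s) fun _ hx => lt_of_le_of_lt (ENNReal.coe_le_coe.mpr hst) hx

lemma IsVal.monotone_superlevel (hν : IsVal L ν) {h : ℕ → X → ℝ≥0∞} (hmem : ∀ n, MemL L (h n))
    (hmono : Monotone h) (t : ℝ≥0) : Monotone fun n => ν {x | (t : ℝ≥0∞) < h n x} :=
  fun m n hmn => hν.2.1 _ (hmem m t) _ (hmem n t) fun x hx => lt_of_lt_of_le hx (hmono hmn x)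

lemma IsOmegaContVal.superlevel_iSup (hνω : IsOmegaContVal L ν) {h : ℕ → X → ℝ≥0∞}
    (hmem : ∀ n, MemL L (h n)) (hmono : Monotone h) (t : ℝ≥0) :
    ν {x | (t : ℝ≥0∞) < ⨆ n, h n x} = ⨆ n, ν {x | (t : ℝ≥0∞) < h n x} := by
  rw [setOf_lt_iSup]
  exact hνω _ (fun n => hmem n t) fun m n hmn x hx => lt_of_lt_of_le hx (hmono hmn x)

end Superlevel

theorem stmt7_general (L : Set (Set X)) (ν : Set X → ℝ≥0∞)
    (hν : IsVal L ν) (hνω : IsOmegaContVal L ν)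
    (h : ℕ → X → ℝ≥0∞) (hmem : ∀ n, MemL L (h n)) (hmono : Monotone h) :
    choquet ν (fun x => ⨆ n, h n x) = ⨆ n, choquet ν (h n) := by
  simp only [choquet, hνω.superlevel_iSup hmem hmono]
  exact riem_iSup (fun n => hν.antitone_superlevel (hmem n)) fun m n hmn t =>
    hν.monotone_superlevel hmem hmono t hmn

/-- ω-continuity of the Choquet integral in the integrated function. -/
theorem stmt7 (L : Set (Set X)) (hL : IsOmegaTop L) (ν : Set X → ℝ≥0∞)
    (hν : IsVal L ν) (hνω : IsOmegaContVal L ν)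
    (h : ℕ → X → ℝ≥0∞) (hmem : ∀ n, MemL L (h n)) (hmono : Monotone h) :
    choquet ν (fun x => ⨆ n, h n x) = ⨆ n, choquet ν (h n) :=
  stmt7_general L ν hν hνω h hmem hmono
end

section
/- Let (X, L) be a Pervin space, μ and ν valuations on (X, L), and suppose ν = g·μ for some g ∈ 𝓛(X, L). Then ν is absolutely continuous with respect to μ: for every U₀ ∈ L with ν(U₀) < ∞ and every ε > 0, there exists η > 0 such that for every U ∈ L with U ⊆ U₀ and μ(U) < η, one has ν(U) < ε. -/
open scoped ENNReal NNReal

variable {X : Type*}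

/-!
Split the integral defining `ν U = ∫₀^∞ μ(U ∩ g⁻¹((t,∞])) dt` at a level `a`. On `(0, a]` the
integrand is at most `μ U`, contributing at most `a · μ U`. On `(a, ∞)` it is dominated by the
integrand for `U₀`, whose integral `ν U₀` is finite, so this tail is small once `a` is large,
uniformly in `U ⊆ U₀`. Choosing `a` first and then `η = ε / (2a)` gives `ν U < ε`.
-/

open MeasureTheory Filter Topology Set

theorem tendsto_setLIntegral_Ioi_atTop_zero {μ : Measure ℝ} {f : ℝ → ℝ≥0∞}
    (hf : ∫⁻ t, f t ∂μ ≠ ∞) :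
    Tendsto (fun a => ∫⁻ t in Ioi a, f t ∂μ) atTop (𝓝 0) := by
  have hρ : ∀ a, μ.withDensity f (Ioi a) = ∫⁻ t in Ioi a, f t ∂μ :=
    fun a => withDensity_apply f measurableSet_Ioi
  have hempty : ⋂ a : ℝ, Ioi a = ∅ :=
    eq_empty_of_forall_notMem fun x hx => lt_irrefl x (mem_iInter.1 hx x)
  have h := tendsto_measure_iInter_atTop (μ := μ.withDensity f)
    (fun a => measurableSet_Ioi.nullMeasurableSet) (fun _ _ hab => Ioi_subset_Ioi hab)
    ⟨0, by rw [hρ]; exact ne_top_of_le_ne_top hf (setLIntegral_le_lintegral _ _)⟩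
  rw [hempty, measure_empty] at h
  simpa only [Function.comp_def, hρ] using h

theorem tendsto_riem_tail {f : ℝ≥0 → ℝ≥0∞} (hf : riem f ≠ ∞) :
    Tendsto (fun a : ℝ≥0 => ∫⁻ t in Ioi (a : ℝ), f t.toNNReal) atTop (𝓝 0) := by
  have h := (tendsto_setLIntegral_Ioi_atTop_zero (μ := volume.restrict (Ioi 0))
    (f := fun t => f t.toNNReal) hf).comp (NNReal.tendsto_coe_atTop.2 tendsto_id)
  refine h.congr fun a => ?_
  simp only [Function.comp_apply, Measure.restrict_restrict measurableSet_Ioi, Ioi_inter_Ioi,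
    id_eq, max_eq_left a.coe_nonneg]

theorem riem_le_mul_add_tail {f : ℝ≥0 → ℝ≥0∞} {c : ℝ≥0∞} (hf : ∀ t, f t ≤ c) (a : ℝ≥0) :
    riem f ≤ a * c + ∫⁻ t in Ioi (a : ℝ), f t.toNNReal := by
  rw [riem, ← Ioc_union_Ioi_eq_Ioi a.coe_nonneg,
    lintegral_union measurableSet_Ioi (Ioc_disjoint_Ioi le_rfl)]
  gcongr
  calc ∫⁻ t in Ioc 0 (a : ℝ), f t.toNNReal ≤ ∫⁻ _ in Ioc 0 (a : ℝ), c :=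
        lintegral_mono fun _ => hf _
    _ = a * c := by simp [mul_comm]

section Valuation

variable {L : Set (Set X)} {μ : Set X → ℝ≥0∞} {g : X → ℝ≥0∞}

theorem densF_le_mul_add_tail (hL : IsLatt L) (hμ : IsVal L μ) (hg : MemL L g)
    {U U₀ : Set X} (hU : U ∈ L) (hU₀ : U₀ ∈ L) (hUU₀ : U ⊆ U₀) (a : ℝ≥0) :
    densF g μ U ≤ a * μ U + ∫⁻ t in Ioi (a : ℝ), μ (U₀ ∩ {x | (t.toNNReal : ℝ≥0∞) < g x}) := by
  have hmem : ∀ V ∈ L, ∀ t : ℝ≥0, V ∩ {x | (t : ℝ≥0∞) < g x} ∈ L :=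
    fun V hV t => hL.2.2.2 V hV _ (hg t)
  refine (riem_le_mul_add_tail (fun t => hμ.2.1 _ (hmem U hU t) _ hU inter_subset_left) a).trans
    ?_
  gcongr with t
  exact hμ.2.1 _ (hmem U hU _) _ (hmem U₀ hU₀ _) (inter_subset_inter_left _ hUU₀)

end Valuation

theorem stmt14_general (L : Set (Set X)) (hL : IsLatt L) (μ ν : Set X → ℝ≥0∞)
    (hμ : IsVal L μ) (g : X → ℝ≥0∞) (hg : MemL L g)
    (heq : ∀ U ∈ L, ν U = densF g μ U) :
    ∀ U₀ ∈ L, ν U₀ < ⊤ → ∀ ε : ℝ≥0, 0 < ε →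
      ∃ η : ℝ≥0, 0 < η ∧ ∀ U ∈ L, U ⊆ U₀ → μ U < η → ν U < ε := by
  intro U₀ hU₀ hνU₀ ε hε
  have hε2 : (0 : ℝ≥0∞) < (ε / 2 : ℝ≥0) := by simpa using hε.ne'
  obtain ⟨a, ha_tail, ha_pos⟩ := ((tendsto_riem_tail (heq U₀ hU₀ ▸ hνU₀).ne |>.eventually
    (gt_mem_nhds hε2)).and (eventually_gt_atTop 0)).exists
  refine ⟨ε / 2 / a, by positivity, fun U hU hUU₀ hμU => ?_⟩
  have hhead : (a : ℝ≥0∞) * μ U < (ε / 2 : ℝ≥0) := by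
    rwa [ENNReal.coe_div ha_pos.ne', ENNReal.lt_div_iff_mul_lt (.inl (by simpa using ha_pos.ne'))
      (.inl (by simp)), mul_comm] at hμU
  calc ν U ≤ a * μ U + ∫⁻ t in Ioi (a : ℝ), μ (U₀ ∩ {x | (t.toNNReal : ℝ≥0∞) < g x}) :=
        heq U hU ▸ densF_le_mul_add_tail hL hμ hg hU hU₀ hUU₀ a
    _ < (ε / 2 : ℝ≥0) + (ε / 2 : ℝ≥0) := ENNReal.add_lt_add hhead ha_tail
    _ = ε := by rw [← ENNReal.coe_add, add_halves]

/-- if `ν = g·μ` then ν is absolutely continuous with respect to μ. -/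
theorem stmt14 (L : Set (Set X)) (hL : IsLatt L) (μ ν : Set X → ℝ≥0∞)
    (hμ : IsVal L μ) (hν : IsVal L ν) (g : X → ℝ≥0∞) (hg : MemL L g)
    (heq : ∀ U ∈ L, ν U = densF g μ U) :
    ∀ U₀ ∈ L, ν U₀ < ⊤ → ∀ ε : ℝ≥0, 0 < ε →
      ∃ η : ℝ≥0, 0 < η ∧ ∀ U ∈ L, U ⊆ U₀ → μ U < η → ν U < ε :=
  stmt14_general L hL μ ν hμ g hg heq
end

section
/- Let L be a lattice of subsets of X and ς : L → ℝ a signed valuation (ς(∅)=0 and ς(U∪V)+ς(U∩V)=ς(U)+ς(V) for all U,V ∈ L). Then ς extends to a unique signed valuation on the smallest algebra of subsets A(L) containing L, and the extension satisfies ς(U \ V) = ς(U) − ς(U ∩ V) = ς(U ∪ V) − ς(V) for all U, V ∈ L. -/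
open scoped ENNReal NNReal

variable {X : Type*}

/-!
A linear relation `∑ a_U 𝟙_U = 0` among indicators of finitely many sets of a lattice is
inherited by every signed valuation `ς` on it, i.e. `∑ a_U ς(U) = 0`; this follows from
modularity by induction on the number of sets. Every `C ∈ A(L)` has `𝟙_C` in the linear span
of the indicators of `L`, so `ς(C) := ∑ a_U ς(U)` for any representation `𝟙_C = ∑ a_U 𝟙_U` is
well defined, and it is modular because `𝟙_{C ∪ D} + 𝟙_{C ∩ D} = 𝟙_C + 𝟙_D`. Applied in the
lattice `A(L)` itself, the same transfer principle forces every extension to take these values.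
-/

section GeneratedAlgebra

variable {L : Set (Set X)}

lemma subset_genAlg : L ⊆ genAlg L :=
  fun _ hU _ hA => hA.1 hU

lemma compl_mem_genAlg {S : Set X} (hS : S ∈ genAlg L) : Sᶜ ∈ genAlg L :=
  fun A hA => hA.2.2.1 _ (hS A hA)

lemma union_mem_genAlg {S T : Set X} (hS : S ∈ genAlg L) (hT : T ∈ genAlg L) :
    S ∪ T ∈ genAlg L :=
  fun A hA => hA.2.2.2 _ (hS A hA) _ (hT A hA)

lemma inter_mem_genAlg {S T : Set X} (hS : S ∈ genAlg L) (hT : T ∈ genAlg L) :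
    S ∩ T ∈ genAlg L := by
  simpa using compl_mem_genAlg (union_mem_genAlg (compl_mem_genAlg hS) (compl_mem_genAlg hT))

lemma isLatt_genAlg : IsLatt (genAlg L) :=
  ⟨fun _ hA => hA.2.1, by simpa using compl_mem_genAlg fun _ hA => hA.2.1,
    fun _ hS _ hT => union_mem_genAlg hS hT, fun _ hS _ hT => inter_mem_genAlg hS hT⟩

lemma genAlg_induction (P : Set X → Prop) (hL : ∀ U ∈ L, P U) (hempty : P ∅)
    (hcompl : ∀ S, P S → P Sᶜ) (hunion : ∀ S, P S → ∀ T, P T → P (S ∪ T))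
    {C : Set X} (hC : C ∈ genAlg L) : P C :=
  hC {S | P S} ⟨hL, hempty, hcompl, hunion⟩

end GeneratedAlgebra

namespace IsSignedVal

variable {M : Set (Set X)} {ς : Set X → ℝ}

lemma map_union_of_disjoint (hς : IsSignedVal M ς) {C D : Set X} (hC : C ∈ M) (hD : D ∈ M)
    (hCD : Disjoint C D) : ς (C ∪ D) = ς C + ς D := by
  have := hς.2 C hC D hD
  rwa [hCD.inter_eq, hς.1, add_zero] at this

lemma map_diff (hς : IsSignedVal M ς) (hM : IsLatt M) {U V : Set X} (hU : U ∈ M) (hV : V ∈ M)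
    (hUV : U \ V ∈ M) : ς (U \ V) = ς U - ς (U ∩ V) ∧ ς (U \ V) = ς (U ∪ V) - ς V := by
  have h₁ := hς.map_union_of_disjoint hUV (hM.2.2.2 U hU V hV)
    (Set.disjoint_sdiff_left.mono_right Set.inter_subset_right)
  have h₂ := hς.map_union_of_disjoint hUV hV Set.disjoint_sdiff_left
  rw [Set.sdiff_union_inter] at h₁
  rw [Set.sdiff_union_self] at h₂
  constructor <;> linarith

/-- The relation is only assumed on `T \ K` so that the induction can split it along `U₀` into
`(T ∩ U₀) \ K` and `T \ (K ∪ U₀)`; modularity of `ς` on `V ∪ K` and `U₀ ∪ K` glues the two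
conclusions back together. -/
lemma relative_sum_eq_zero (hM : IsLatt M) (hς : IsSignedVal M ς) (a : Set X → ℝ)
    (s : Finset (Set X)) (hs : ↑s ⊆ M) :
    ∀ T ∈ M, ∀ K ∈ M, ∀ c : ℝ,
      (∀ x ∈ T \ K, c + ∑ U ∈ s, a U * U.indicator 1 x = 0) →
      c * (ς (T ∪ K) - ς K) + ∑ U ∈ s, a U * (ς (U ∩ T ∪ K) - ς K) = 0 := by
  classical
  induction s using Finset.induction_on with
  | empty =>
    intro T _ K _ c hc
    by_cases hTK : T ⊆ K
    · simp [Set.union_eq_right.2 hTK]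
    · obtain ⟨x, hx⟩ := Set.not_subset.1 hTK
      have hc0 : c = 0 := by simpa using hc x hx
      simp [hc0]
  | @insert U₀ s hU₀ ih =>
    intro T hT K hK c hc
    have hU₀M : U₀ ∈ M := hs (Finset.mem_insert_self U₀ s)
    have hsM : ↑s ⊆ M := fun U hU => hs (Finset.mem_insert_of_mem hU)
    have hin := ih hsM (T ∩ U₀) (hM.2.2.2 T hT U₀ hU₀M) K hK (c + a U₀) fun x hx => by
      have := hc x ⟨hx.1.1, hx.2⟩
      rw [Finset.sum_insert hU₀, Set.indicator_of_mem hx.1.2] at this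
      simpa [add_assoc] using this
    have hout := ih hsM T hT (K ∪ U₀) (hM.2.2.1 K hK U₀ hU₀M) c fun x hx => by
      have := hc x ⟨hx.1, fun h => hx.2 (Or.inl h)⟩
      rwa [Finset.sum_insert hU₀, Set.indicator_of_notMem fun h => hx.2 (Or.inr h),
        mul_zero, zero_add] at this
    have hsplit : ∀ V ∈ M, ς (V ∪ K) - ς K =
        (ς (V ∩ U₀ ∪ K) - ς K) + (ς (V ∪ (K ∪ U₀)) - ς (K ∪ U₀)) := by
      intro V hV
      have := hς.2 (V ∪ K) (hM.2.2.1 V hV K hK) (U₀ ∪ K) (hM.2.2.1 U₀ hU₀M K hK)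
      have hunion : V ∪ K ∪ (U₀ ∪ K) = V ∪ (K ∪ U₀) := by
        ext; simp only [Set.mem_union]; tauto
      rw [← Set.inter_union_distrib_right, hunion, Set.union_comm U₀ K] at this
      linarith
    rw [Finset.sum_insert hU₀, hsplit T hT, Set.inter_comm U₀ T,
      Finset.sum_congr rfl fun U hU => by
        rw [hsplit (U ∩ T) (hM.2.2.2 U (hsM hU) T hT), Set.inter_assoc]]
    simp only [mul_add, Finset.sum_add_distrib] at hin ⊢
    linear_combination hin + hout

lemma sum_eq_zero_of_sum_indicator_eq_zero (hM : IsLatt M) (hς : IsSignedVal M ς)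
    (a : Set X → ℝ) (s : Finset (Set X)) (hs : ↑s ⊆ M)
    (hrel : ∀ x, ∑ U ∈ s, a U * U.indicator 1 x = 0) : ∑ U ∈ s, a U * ς U = 0 := by
  have := hς.relative_sum_eq_zero hM a s hs Set.univ hM.2.1 ∅ hM.1 0 fun x _ => by
    simpa using hrel x
  simpa [hς.1] using this

lemma linearCombination_eq_of_indicator_eq (hM : IsLatt M) (hς : IsSignedVal M ς)
    {l₁ l₂ : Set X →₀ ℝ} (h₁ : l₁ ∈ Finsupp.supported ℝ ℝ M) (h₂ : l₂ ∈ Finsupp.supported ℝ ℝ M)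
    (h : Finsupp.linearCombination ℝ (fun U : Set X => U.indicator (1 : X → ℝ)) l₁ =
      Finsupp.linearCombination ℝ (fun U : Set X => U.indicator (1 : X → ℝ)) l₂) :
    Finsupp.linearCombination ℝ ς l₁ = Finsupp.linearCombination ℝ ς l₂ := by
  rw [← sub_eq_zero, ← map_sub] at h ⊢
  have hsupp := Submodule.sub_mem _ h₁ h₂
  rw [Finsupp.linearCombination_apply, Finsupp.sum]
  refine hς.sum_eq_zero_of_sum_indicator_eq_zero hM _ _ hsupp fun x => ?_
  simpa [Finsupp.linearCombination_apply, Finsupp.sum] using congrFun h x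

end IsSignedVal

section Extension

variable {L : Set (Set X)} {ς : Set X → ℝ}

open scoped Pointwise in
lemma indicator_mem_span_of_mem_genAlg (hL : IsLatt L) {C : Set X} (hC : C ∈ genAlg L) :
    C.indicator (1 : X → ℝ) ∈
      Submodule.span ℝ ((fun U : Set X => U.indicator (1 : X → ℝ)) '' L) := by
  set S := (fun U : Set X => U.indicator (1 : X → ℝ)) '' L
  have hmem : ∀ U ∈ L, U.indicator (1 : X → ℝ) ∈ Submodule.span ℝ S :=
    fun U hU => Submodule.subset_span ⟨U, hU, rfl⟩
  have hmul : ∀ f ∈ Submodule.span ℝ S, ∀ g ∈ Submodule.span ℝ S,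
      f * g ∈ Submodule.span ℝ S := by
    intro f hf g hg
    have hSS : S * S ⊆ S := by
      rintro _ ⟨_, ⟨U, hU, rfl⟩, _, ⟨V, hV, rfl⟩, rfl⟩
      exact ⟨U ∩ V, hL.2.2.2 U hU V hV, Set.inter_indicator_one⟩
    have := Submodule.mul_mem_mul hf hg
    rw [Submodule.span_mul_span] at this
    exact Submodule.span_mono hSS this
  refine genAlg_induction (fun C => C.indicator (1 : X → ℝ) ∈ Submodule.span ℝ S) hmem
    (by rw [Set.indicator_empty']; exact Submodule.zero_mem _) (fun C hC => ?_)
    (fun C hC D hD => ?_) hC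
  · have := Submodule.sub_mem _ (hmem _ hL.2.1) hC
    rwa [Set.indicator_univ, ← Set.indicator_compl] at this
  · rw [eq_sub_of_add_eq (Set.indicator_union_add_inter (1 : X → ℝ) C D),
      Set.inter_indicator_one]
    exact Submodule.sub_mem _ (Submodule.add_mem _ hC hD) (hmul _ hC _ hD)

lemma exists_indicator_eq_linearCombination (hL : IsLatt L) {C : Set X} (hC : C ∈ genAlg L) :
    ∃ l ∈ Finsupp.supported ℝ ℝ L,
      Finsupp.linearCombination ℝ (fun U : Set X => U.indicator (1 : X → ℝ)) l = C.indicator 1 :=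
  (Finsupp.mem_span_image_iff_linearCombination ℝ).1 (indicator_mem_span_of_mem_genAlg hL hC)

open Classical in
/-- `∑ a_U ς(U)` for a chosen representation `𝟙_C = ∑ a_U 𝟙_U` with `U ∈ L`; the choice does
not matter by `extendVal_eq`, and the value is a junk `0` when there is none. -/
noncomputable def extendVal (L : Set (Set X)) (ς : Set X → ℝ) (C : Set X) : ℝ :=
  if h : ∃ l ∈ Finsupp.supported ℝ ℝ L,
      Finsupp.linearCombination ℝ (fun U : Set X => U.indicator (1 : X → ℝ)) l = C.indicator 1
  then Finsupp.linearCombination ℝ ς h.choose else 0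

lemma extendVal_eq (hL : IsLatt L) (hς : IsSignedVal L ς) {C : Set X} {l : Set X →₀ ℝ}
    (hl : l ∈ Finsupp.supported ℝ ℝ L)
    (hlC : Finsupp.linearCombination ℝ (fun U : Set X => U.indicator (1 : X → ℝ)) l =
      C.indicator 1) :
    extendVal L ς C = Finsupp.linearCombination ℝ ς l := by
  have h : ∃ l ∈ Finsupp.supported ℝ ℝ L,
      Finsupp.linearCombination ℝ (fun U : Set X => U.indicator (1 : X → ℝ)) l =
        C.indicator 1 := ⟨l, hl, hlC⟩
  rw [extendVal, dif_pos h]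
  exact hς.linearCombination_eq_of_indicator_eq hL h.choose_spec.1 hl
    (h.choose_spec.2.trans hlC.symm)

lemma extendVal_of_mem (hL : IsLatt L) (hς : IsSignedVal L ς) {U : Set X} (hU : U ∈ L) :
    extendVal L ς U = ς U := by
  rw [extendVal_eq hL hς (Finsupp.single_mem_supported ℝ 1 hU) (by simp)]
  simp

lemma isSignedVal_extendVal (hL : IsLatt L) (hς : IsSignedVal L ς) :
    IsSignedVal (genAlg L) (extendVal L ς) := by
  refine ⟨(extendVal_of_mem hL hς hL.1).trans hς.1, fun C hC D hD => ?_⟩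
  obtain ⟨lC, hlC, hCl⟩ := exists_indicator_eq_linearCombination hL hC
  obtain ⟨lD, hlD, hDl⟩ := exists_indicator_eq_linearCombination hL hD
  obtain ⟨lU, hlU, hUl⟩ := exists_indicator_eq_linearCombination hL (union_mem_genAlg hC hD)
  obtain ⟨lI, hlI, hIl⟩ := exists_indicator_eq_linearCombination hL (inter_mem_genAlg hC hD)
  rw [extendVal_eq hL hς hlC hCl, extendVal_eq hL hς hlD hDl, extendVal_eq hL hς hlU hUl,
    extendVal_eq hL hς hlI hIl, ← map_add, ← map_add]
  refine hς.linearCombination_eq_of_indicator_eq hL (Submodule.add_mem _ hlU hlI)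
    (Submodule.add_mem _ hlC hlD) ?_
  rw [map_add, map_add, hCl, hDl, hUl, hIl]
  exact Set.indicator_union_add_inter _ C D

lemma IsSignedVal.eq_extendVal (hL : IsLatt L) (hς : IsSignedVal L ς) {ς' : Set X → ℝ}
    (hς' : IsSignedVal (genAlg L) ς') (hagree : ∀ U ∈ L, ς' U = ς U) {C : Set X}
    (hC : C ∈ genAlg L) : ς' C = extendVal L ς C := by
  obtain ⟨l, hl, hlC⟩ := exists_indicator_eq_linearCombination hL hC
  rw [extendVal_eq hL hς hl hlC]
  calc ς' C = Finsupp.linearCombination ℝ ς' (Finsupp.single C 1) := by simp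
    _ = Finsupp.linearCombination ℝ ς' l :=
      hς'.linearCombination_eq_of_indicator_eq isLatt_genAlg
        (Finsupp.single_mem_supported ℝ 1 hC) (Finsupp.supported_mono subset_genAlg hl)
        (by simp [hlC])
    _ = Finsupp.linearCombination ℝ ς l := by
      simp only [Finsupp.linearCombination_apply]
      exact Finsupp.sum_congr fun U hU => by
        rw [hagree U ((Finsupp.mem_supported ℝ l).1 hl hU)]

end Extension

/-- signed Smiley–Horn–Tarski: every signed valuation on `(X, L)` extends
to a unique signed valuation on the generated algebra `A(L)`, and the extension satisfies
`ς(U \ V) = ς(U) − ς(U ∩ V) = ς(U ∪ V) − ς(V)`. -/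
theorem stmt15 (L : Set (Set X)) (hL : IsLatt L) (sg : Set X → ℝ)
    (hsg : IsSignedVal L sg) :
    (∃ sg' : Set X → ℝ, (∀ U ∈ L, sg' U = sg U) ∧ IsSignedVal (genAlg L) sg' ∧
        ∀ U ∈ L, ∀ V ∈ L,
          sg' (U \ V) = sg' U - sg' (U ∩ V) ∧ sg' (U \ V) = sg' (U ∪ V) - sg' V) ∧
      ∀ sg₁ sg₂ : Set X → ℝ,
        (∀ U ∈ L, sg₁ U = sg U) → IsSignedVal (genAlg L) sg₁ →
        (∀ U ∈ L, sg₂ U = sg U) → IsSignedVal (genAlg L) sg₂ →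
        ∀ C ∈ genAlg L, sg₁ C = sg₂ C := by
  refine ⟨⟨extendVal L sg, fun U hU => extendVal_of_mem hL hsg hU,
    isSignedVal_extendVal hL hsg, fun U hU V hV => ?_⟩,
    fun sg₁ sg₂ h₁ hv₁ h₂ hv₂ C hC => ?_⟩
  · have hU' := subset_genAlg hU
    have hV' := subset_genAlg hV
    exact (isSignedVal_extendVal hL hsg).map_diff isLatt_genAlg hU' hV'
      (inter_mem_genAlg hU' (compl_mem_genAlg hV'))
  · rw [hsg.eq_extendVal hL hv₁ h₁ hC, hsg.eq_extendVal hL hv₂ h₂ hC]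
end
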